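/- arXiv:2209.02319 — 7 statements merged into one kernel-verified Lean document; each statement's English description precedes it below -/
import Mathlib

section
/- Let S_1, …, S_k be convex sets in ℝ^d. If there exists a (k−2)-dimensional affine subspace intersecting every S_i, then there is a proper nonempty index set I ⊂ {1,…,k} such that the convex hulls of ⋃_{i∈I} S_i and ⋃_{i∉I} S_i have a common point (i.e., the family is not well-separated). -/
/-- A (k-2)-transversal of convex sets implies they are not well-separated. -/
theorem stmt0 (d k : ℕ) (hk : 2 ≤ k) (S : Fin k → Set (Fin d → ℝ))
    (hconv : ∀ i, Convex ℝ (S i))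
    (W : AffineSubspace ℝ (Fin d → ℝ))
    (hdim : Module.finrank ℝ W.direction = k - 2)
    (htrans : ∀ i, (S i ∩ ↑W).Nonempty) :
    ∃ I : Finset (Fin k), I.Nonempty ∧ I ≠ Finset.univ ∧
      ((convexHull ℝ (⋃ i ∈ I, S i)) ∩ (convexHull ℝ (⋃ i ∈ Iᶜ, S i))).Nonempty := by
  classical
  choose p hpS hpW using htrans
  have hdep : ¬ AffineIndependent ℝ p := by
    intro hind
    have hcard : Fintype.card (Fin k) = (k - 1) + 1 := by
      simp only [Fintype.card_fin]; omega
    have hfr := hind.finrank_vectorSpan hcard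
    have hle : vectorSpan ℝ (Set.range p) ≤ W.direction := by
      rw [AffineSubspace.direction_eq_vectorSpan]
      exact vectorSpan_mono ℝ (Set.range_subset_iff.2 hpW)
    have := Submodule.finrank_mono hle
    omega
  obtain ⟨I, x, hxI, hxIc⟩ := Convex.radon_partition hdep
  have hIne : I.Nonempty := by
    rcases Set.eq_empty_or_nonempty I with h | h
    · simp [h] at hxI
    · exact h
  have hIcne : Iᶜ.Nonempty := by
    rcases Set.eq_empty_or_nonempty Iᶜ with h | h
    · simp [h] at hxIc
    · exact h
  refine ⟨I.toFinset, by simpa using hIne, ?_, x, ?_, ?_⟩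
  · intro h
    obtain ⟨i, hi⟩ := hIcne
    exact hi (Set.mem_toFinset.mp (h ▸ Finset.mem_univ i))
  · refine convexHull_mono ?_ hxI
    rintro y ⟨i, hi, rfl⟩
    exact Set.mem_biUnion (Set.mem_toFinset.mpr hi) (hpS i)
  · refine convexHull_mono ?_ hxIc
    rintro y ⟨i, hi, rfl⟩
    exact Set.mem_biUnion (Finset.mem_compl.mpr fun h => hi (Set.mem_toFinset.mp h)) (hpS i)
end

section
/- Let S_1, …, S_k be convex sets in ℝ^d. If there is a proper nonempty index set I ⊂ {1,…,k} such that the convex hulls of ⋃_{i∈I} S_i and ⋃_{i∉I} S_i intersect, then there exists an affine subspace of dimension at most k−2 that intersects every S_i. -/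
open Finset

/-- A point in the convex hull of a finite union of convex sets is a convex combination
using at most one point from each set. -/
lemma rep_lemma {E : Type*} [AddCommGroup E] [Module ℝ E] {k : ℕ} (S : Fin k → Set E)
    (hconv : ∀ i, Convex ℝ (S i)) (hne : ∀ i, (S i).Nonempty)
    (I : Finset (Fin k)) (hI : I.Nonempty) {x : E}
    (hx : x ∈ convexHull ℝ (⋃ i ∈ I, S i)) :
    ∃ (α : Fin k → ℝ) (a : Fin k → E), (∀ i, 0 ≤ α i) ∧ (∀ i, a i ∈ S i) ∧
      ∑ i ∈ I, α i = 1 ∧ ∑ i ∈ I, α i • a i = x := by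
  classical
  rw [_root_.convexHull_eq] at hx
  obtain ⟨ι, t, w, z, hw₀, hw₁, hz, hcm⟩ := hx
  obtain ⟨i0, hi0⟩ := hI
  set f : ι → Fin k := fun j => if h : ∃ i ∈ I, z j ∈ S i then h.choose else i0 with hf
  have hfmem : ∀ j ∈ t, f j ∈ I ∧ z j ∈ S (f j) := by
    intro j hj
    have h : ∃ i ∈ I, z j ∈ S i := by
      have := hz j hj
      simp only [Set.mem_iUnion] at this
      obtain ⟨i, hi, hzi⟩ := this
      exact ⟨i, hi, hzi⟩
    simp only [hf, dif_pos h]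
    exact ⟨h.choose_spec.1, h.choose_spec.2⟩
  set α : Fin k → ℝ := fun i => ∑ j ∈ t.filter (fun j => f j = i), w j with hα
  have hα0 : ∀ i, 0 ≤ α i := fun i =>
    Finset.sum_nonneg fun j hj => hw₀ j (Finset.mem_filter.1 hj).1
  set a : Fin k → E := fun i =>
    if h : 0 < α i then (t.filter (fun j => f j = i)).centerMass w z else (hne i).some with ha
  have haS : ∀ i, a i ∈ S i := by
    intro i
    by_cases h : 0 < α i
    · simp only [ha, dif_pos h]
      refine (hconv i).centerMass_mem (fun j hj => hw₀ j (Finset.mem_filter.1 hj).1) h ?_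
      intro j hj
      obtain ⟨hjt, hji⟩ := Finset.mem_filter.1 hj
      have := (hfmem j hjt).2
      rwa [hji] at this
    · simp only [ha, dif_neg h]
      exact (hne i).some_mem
  have key : ∀ i, α i • a i = ∑ j ∈ t.filter (fun j => f j = i), w j • z j := by
    intro i
    by_cases h : 0 < α i
    · simp only [ha, dif_pos h]
      rw [Finset.centerMass, smul_smul]
      have hs : (∑ j ∈ t.filter (fun j => f j = i), w j) = α i := rfl
      rw [hs, mul_inv_cancel₀ (ne_of_gt h), one_smul]
    · have hz0 : α i = 0 := le_antisymm (not_lt.1 h) (hα0 i)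
      have : ∀ j ∈ t.filter (fun j => f j = i), w j = 0 := by
        intro j hj
        have := (Finset.sum_eq_zero_iff_of_nonneg
          (fun j hj => hw₀ j (Finset.mem_filter.1 hj).1)).1 hz0
        exact this j hj
      rw [hz0, zero_smul]
      exact (Finset.sum_eq_zero fun j hj => by rw [this j hj, zero_smul]).symm
  have hmap : ∀ j ∈ t, f j ∈ I := fun j hj => (hfmem j hj).1
  refine ⟨α, a, hα0, haS, ?_, ?_⟩
  · calc ∑ i ∈ I, α i = ∑ j ∈ t, w j := Finset.sum_fiberwise_of_maps_to hmap w
      _ = 1 := hw₁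
  · calc ∑ i ∈ I, α i • a i = ∑ i ∈ I, ∑ j ∈ t.filter (fun j => f j = i), w j • z j := by
          exact Finset.sum_congr rfl fun i _ => key i
      _ = ∑ j ∈ t, w j • z j := Finset.sum_fiberwise_of_maps_to hmap _
      _ = x := by rw [← hcm, Finset.centerMass_eq_of_sum_1 _ _ hw₁]

/-- If the family of convex sets is not well-separated, then there is an
affine subspace of dimension at most k-2 meeting every set. -/
theorem stmt1 (d k : ℕ) (S : Fin k → Set (Fin d → ℝ))
    (hconv : ∀ i, Convex ℝ (S i)) (hne : ∀ i, (S i).Nonempty)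
    (I : Finset (Fin k)) (hI : I.Nonempty) (hIu : I ≠ Finset.univ)
    (hint : ((convexHull ℝ (⋃ i ∈ I, S i)) ∩ (convexHull ℝ (⋃ i ∈ Iᶜ, S i))).Nonempty) :
    ∃ W : AffineSubspace ℝ (Fin d → ℝ), Module.finrank ℝ W.direction ≤ k - 2 ∧
      ∀ i, (S i ∩ ↑W).Nonempty := by
  classical
  obtain ⟨x, hx1, hx2⟩ := hint
  have hIc : Iᶜ.Nonempty := by
    rw [← Finset.card_pos, Finset.card_compl]
    simp only [Fintype.card_fin]
    have : I.card < k := by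
      have := Finset.card_lt_card (lt_of_le_of_ne (Finset.subset_univ I) hIu)
      simpa using this
    omega
  obtain ⟨α, a, hα0, haS, hα1, hαx⟩ := rep_lemma S hconv hne I hI hx1
  obtain ⟨β, b, hβ0, hbS, hβ1, hβx⟩ := rep_lemma S hconv hne Iᶜ hIc hx2
  set p : Fin k → (Fin d → ℝ) := fun i => if i ∈ I then a i else b i with hp
  have hpS : ∀ i, p i ∈ S i := by
    intro i
    by_cases h : i ∈ I <;> simp only [hp, h, if_true, if_false] <;> [exact haS i; exact hbS i]
  refine ⟨affineSpan ℝ (Set.range p), ?_, ?_⟩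
  · rw [direction_affineSpan]
    have hk2 : Fintype.card (Fin k) = (k - 2) + 2 := by
      simp only [Fintype.card_fin]
      have h2 : 2 ≤ k := by
        have h1 := Finset.card_pos.2 hI
        have h2 := Finset.card_pos.2 hIc
        rw [Finset.card_compl] at h2
        simp only [Fintype.card_fin] at h2
        omega
      omega
    rw [finrank_vectorSpan_le_iff_not_affineIndependent ℝ p hk2]
    intro hind
    rw [affineIndependent_iff] at hind
    set wt : Fin k → ℝ := fun i => if i ∈ I then α i else -β i with hwt
    have hsum : ∑ i ∈ Finset.univ, wt i = 0 := by
      rw [← Finset.sum_add_sum_compl I]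
      have e1 : ∑ i ∈ I, wt i = 1 := by
        rw [← hα1]; exact Finset.sum_congr rfl fun i hi => by simp [hwt, hi]
      have e2 : ∑ i ∈ Iᶜ, wt i = -1 := by
        have : ∑ i ∈ Iᶜ, wt i = -∑ i ∈ Iᶜ, β i := by
          rw [← Finset.sum_neg_distrib]
          exact Finset.sum_congr rfl fun i hi => by
            simp [hwt, Finset.mem_compl.1 hi]
        rw [this, hβ1]
      rw [e1, e2]; ring
    have hvsum : ∑ i ∈ Finset.univ, wt i • p i = 0 := by
      rw [← Finset.sum_add_sum_compl I]
      have e1 : ∑ i ∈ I, wt i • p i = x := by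
        rw [← hαx]
        exact Finset.sum_congr rfl fun i hi => by simp [hwt, hp, hi]
      have e2 : ∑ i ∈ Iᶜ, wt i • p i = -x := by
        rw [← hβx, ← Finset.sum_neg_distrib]
        exact Finset.sum_congr rfl fun i hi => by
          have hi' := Finset.mem_compl.1 hi
          simp [hwt, hp, hi', neg_smul]
      rw [e1, e2]; simp
    have := hind Finset.univ wt hsum hvsum
    obtain ⟨i, hi, hαi⟩ : ∃ i ∈ I, α i ≠ 0 := by
      by_contra h
      push_neg at h
      have : ∑ i ∈ I, α i = 0 := Finset.sum_eq_zero h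
      rw [hα1] at this; norm_num at this
    have := this i (Finset.mem_univ i)
    simp only [hwt, hi, if_true] at this
    exact hαi this
  · intro i
    exact ⟨p i, hpS i, subset_affineSpan ℝ _ (Set.mem_range_self i)⟩
end

section
/- Given integers a_1, …, a_n, b, define vectors in ℝ^{n+1}: u with u(1) = −b and u(j) = −1 for 2 ≤ j ≤ n+1; v_i with v_i(1) = a_i and v_i(j) = δ_{i+1,j} for 2 ≤ j ≤ n+1; and w_i with w_i(1) = 0 and w_i(j) = δ_{i+1,j}. Set S_i = {v_i, w_i} for i = 1,…,n, S_{n+1} = {u}, S_{n+2} = {0}. Then there exists an index set I ⊆ {1,…,n} with ∑_{i∈I} a_i = b if and only if there exists a hyperplane in ℝ^{n+1} containing one point from each of S_1, …, S_{n+2}. -/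
/-!
A hyperplane through the origin is the kernel of a nonzero linear functional `f`. Writing
`c₀ = f e₀` and `cᵢ = f eᵢ₊₁`, it contains `u` iff `b c₀ + ∑ cᵢ = 0`, and it meets `Sᵢ` iff
`cᵢ = -aᵢ c₀` or `cᵢ = 0`. Then `c₀ ≠ 0` (otherwise `f = 0`), and the indices where the first
alternative holds form a subset with sum `b`. Conversely, `c₀ = 1`, `cᵢ = -aᵢ` on `I` and
`cᵢ = 0` off `I` define such a functional.
-/

/-- The vector u of the SubsetSum reduction: first coordinate -b, all others -1. -/
noncomputable def uVec (n : ℕ) (b : ℤ) : Fin (n + 1) → ℝ :=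
  fun j => if (j : ℕ) = 0 then (-b : ℝ) else -1

/-- The vector v_i: first coordinate a_i, coordinate i+1 equal to 1, all others 0. -/
noncomputable def vVec (n : ℕ) (a : Fin n → ℤ) (i : Fin n) : Fin (n + 1) → ℝ :=
  fun j => if (j : ℕ) = 0 then (a i : ℝ) else if (j : ℕ) = (i : ℕ) + 1 then 1 else 0

/-- The vector w_i: first coordinate 0, coordinate i+1 equal to 1, all others 0. -/
noncomputable def wVec (n : ℕ) (i : Fin n) : Fin (n + 1) → ℝ :=
  fun j => if (j : ℕ) = 0 then 0 else if (j : ℕ) = (i : ℕ) + 1 then 1 else 0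

theorem AffineSubspace.exists_dual_ne_zero_forall_mem_eq_zero {K V : Type*} [Field K]
    [AddCommGroup V] [Module K V] {W : AffineSubspace K V} (h0 : (0 : V) ∈ W)
    (hW : W.direction ≠ ⊤) : ∃ f : Module.Dual K V, f ≠ 0 ∧ ∀ x ∈ W, f x = 0 := by
  obtain ⟨f, hf, hmap⟩ :=
    Submodule.exists_dual_map_eq_bot_of_lt_top hW.lt_top inferInstance
  refine ⟨f, hf, fun x hx => ?_⟩
  have hxW : x ∈ W.direction := by
    simpa using (AffineSubspace.vsub_right_mem_direction_iff_mem h0 x).2 hx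
  simpa [hmap] using Submodule.mem_map_of_mem (f := f) hxW

section SubsetSumReduction

variable {n : ℕ}

theorem vVec_eq (a : Fin n → ℤ) (i : Fin n) :
    vVec n a i = (a i : ℝ) • Pi.single 0 1 + Pi.single i.succ 1 := by
  ext j
  refine Fin.cases ?_ (fun j => ?_) j
  · simp [vVec]
  · by_cases h : j = i <;> simp [vVec, Pi.single_apply, h, Fin.ext_iff]

theorem wVec_eq (i : Fin n) : wVec n i = Pi.single i.succ 1 := by
  ext j
  refine Fin.cases ?_ (fun j => ?_) j
  · simp [wVec]
  · by_cases h : j = i <;> simp [wVec, Pi.single_apply, h, Fin.ext_iff]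

theorem uVec_eq (b : ℤ) :
    uVec n b = -(b : ℝ) • Pi.single 0 1 - ∑ i : Fin n, Pi.single i.succ 1 := by
  ext j
  refine Fin.cases ?_ (fun j => ?_) j
  · simp [uVec, Finset.sum_apply]
  · simp [uVec, Finset.sum_apply, Pi.single_apply]

theorem dual_apply_vVec (f : Module.Dual ℝ (Fin (n + 1) → ℝ)) (a : Fin n → ℤ) (i : Fin n) :
    f (vVec n a i) = a i * f (Pi.single 0 1) + f (Pi.single i.succ 1) := by
  simp [vVec_eq]

theorem dual_apply_wVec (f : Module.Dual ℝ (Fin (n + 1) → ℝ)) (i : Fin n) :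
    f (wVec n i) = f (Pi.single i.succ 1) := by
  rw [wVec_eq]

theorem dual_apply_uVec (f : Module.Dual ℝ (Fin (n + 1) → ℝ)) (b : ℤ) :
    f (uVec n b) = -(b * f (Pi.single 0 1)) - ∑ i : Fin n, f (Pi.single i.succ 1) := by
  simp [uVec_eq]

theorem exists_sum_eq_of_dual_transversal (f : Module.Dual ℝ (Fin (n + 1) → ℝ)) (a : Fin n → ℤ)
    (b : ℤ) (hf : f ≠ 0) (hu : f (uVec n b) = 0)
    (hvw : ∀ i, f (vVec n a i) = 0 ∨ f (wVec n i) = 0) :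
    ∃ I : Finset (Fin n), ∑ i ∈ I, a i = b := by
  classical
  have hf0 : f (Pi.single 0 1) ≠ 0 := by
    intro h0
    refine hf ((Pi.basisFun ℝ (Fin (n + 1))).ext fun j => ?_)
    rw [Pi.basisFun_apply, LinearMap.zero_apply]
    refine Fin.cases h0 (fun i => ?_) j
    rcases hvw i with h | h
    · simpa [dual_apply_vVec, h0] using h
    · rwa [dual_apply_wVec] at h
  set I := Finset.univ.filter fun i => f (vVec n a i) = 0
  refine ⟨I, ?_⟩
  have hI : ∀ i ∈ I, f (Pi.single i.succ 1) = -(a i * f (Pi.single 0 1)) := by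
    intro i hi
    have := (Finset.mem_filter.1 hi).2
    rw [dual_apply_vVec] at this
    linarith
  have hnotI : ∀ i ∉ I, f (Pi.single i.succ 1) = 0 := by
    intro i hi
    rw [← dual_apply_wVec]
    exact (hvw i).resolve_left (by simpa [I] using hi)
  have hsum :
      ∑ i : Fin n, f (Pi.single i.succ 1) = -((∑ i ∈ I, a i : ℤ) * f (Pi.single 0 1)) := by
    rw [← Finset.sum_subset (Finset.subset_univ I) fun i _ hi => hnotI i hi,
      Finset.sum_congr rfl hI]
    push_cast
    rw [Finset.sum_mul, Finset.sum_neg_distrib]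
  rw [dual_apply_uVec, hsum] at hu
  exact_mod_cast (mul_right_cancel₀ hf0 (by linarith : ((∑ i ∈ I, a i : ℤ) : ℝ) * _ = b * _))

theorem exists_dual_transversal_of_sum_eq (a : Fin n → ℤ) (b : ℤ) (I : Finset (Fin n))
    (hI : ∑ i ∈ I, a i = b) : ∃ f : Module.Dual ℝ (Fin (n + 1) → ℝ), f ≠ 0 ∧
      f (uVec n b) = 0 ∧ ∀ i, f (vVec n a i) = 0 ∨ f (wVec n i) = 0 := by
  classical
  set c : Fin (n + 1) → ℝ := Fin.cons 1 fun i => if i ∈ I then -(a i : ℝ) else 0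
  set f := (Pi.basisFun ℝ (Fin (n + 1))).constr ℝ c
  have hf : ∀ j, f (Pi.single j 1) = c j := by
    intro j
    rw [← Pi.basisFun_apply]
    exact (Pi.basisFun ℝ (Fin (n + 1))).constr_basis ℝ c j
  refine ⟨f, fun h => by simpa [c, h] using hf 0, ?_, fun i => ?_⟩
  · rw [dual_apply_uVec]
    simp only [hf, c, Fin.cons_zero, Fin.cons_succ, Finset.sum_ite_mem, Finset.univ_inter,
      Finset.sum_neg_distrib, ← hI]
    push_cast
    ring
  · by_cases hi : i ∈ I
    · left
      simp [dual_apply_vVec, hf, c, hi]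
    · right
      simp [dual_apply_wVec, hf, c, hi]

end SubsetSumReduction

/-- correctness of the SubsetSum reduction: a subset of the a_i sums to b
iff there is a hyperplane in ℝ^{n+1} containing one point of each set
S_i = {v_i, w_i}, S_{n+1} = {u}, S_{n+2} = {0}. -/
theorem stmt6 (n : ℕ) (a : Fin n → ℤ) (b : ℤ) :
    (∃ I : Finset (Fin n), ∑ i ∈ I, a i = b) ↔
      ∃ W : AffineSubspace ℝ (Fin (n + 1) → ℝ),
        Module.finrank ℝ W.direction = n ∧
        (∀ i : Fin n, vVec n a i ∈ W ∨ wVec n i ∈ W) ∧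
        uVec n b ∈ W ∧ (0 : Fin (n + 1) → ℝ) ∈ W := by
  constructor
  · rintro ⟨I, hI⟩
    obtain ⟨f, hf, hu, hvw⟩ := exists_dual_transversal_of_sum_eq a b I hI
    refine ⟨(LinearMap.ker f).toAffineSubspace, ?_, hvw, hu, (LinearMap.ker f).zero_mem⟩
    have hker := f.finrank_ker_add_one_of_ne_zero hf
    rw [Module.finrank_fin_fun] at hker
    rw [Submodule.toAffineSubspace_direction]
    omega
  · rintro ⟨W, hrank, hvw, hu, h0⟩
    have hW : W.direction ≠ ⊤ := fun h => by
      rw [h, finrank_top, Module.finrank_fin_fun] at hrank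
      omega
    obtain ⟨f, hf, hfW⟩ := W.exists_dual_ne_zero_forall_mem_eq_zero h0 hW
    exact exists_sum_eq_of_dual_transversal f a b hf (hfW _ hu) fun i =>
      (hvw i).imp (hfW _) (hfW _)
end

section
/- With the SubsetSum reduction vectors u, v_i, w_i in ℝ^{n+1} as defined, if points x_i ∈ {v_i, w_i} for i = 1,…,n satisfy 0 = ∑_{i=1}^n λ_i x_i + λ_{n+1} u for reals λ_i with ∑_{i=1}^{n+1} λ_i = 1, then all λ_i are equal to 1/(n+1), and the index set I = {i : x_i = v_i} satisfies ∑_{i∈I} a_i = b. -/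
@[simp]
lemma uVec_apply_zero (n : ℕ) (b : ℤ) : uVec n b 0 = -b := by
  simp [uVec]

@[simp]
lemma uVec_apply_succ (n : ℕ) (b : ℤ) (i : Fin n) : uVec n b i.succ = -1 := by
  simp [uVec]

@[simp]
lemma vVec_apply_zero (n : ℕ) (a : Fin n → ℤ) (k : Fin n) : vVec n a k 0 = a k := by
  simp [vVec]

lemma vVec_apply_succ (n : ℕ) (a : Fin n → ℤ) (k i : Fin n) :
    vVec n a k i.succ = if k = i then 1 else 0 := by
  simp [vVec, Fin.ext_iff, eq_comm]

@[simp]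
lemma wVec_apply_zero (n : ℕ) (k : Fin n) : wVec n k 0 = 0 := by
  simp [wVec]

lemma wVec_apply_succ (n : ℕ) (k i : Fin n) : wVec n k i.succ = if k = i then 1 else 0 := by
  simp [wVec, Fin.ext_iff, eq_comm]

section Selection

variable {n : ℕ} {a : Fin n → ℤ} {x : Fin n → Fin (n + 1) → ℝ}

lemma apply_succ_of_forall_eq_vVec_or_eq_wVec (hx : ∀ i, x i = vVec n a i ∨ x i = wVec n i)
    (k i : Fin n) : x k i.succ = if k = i then 1 else 0 := by
  rcases hx k with h | h <;> simp [h, vVec_apply_succ, wVec_apply_succ]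

lemma apply_zero_of_forall_eq_vVec_or_eq_wVec (hx : ∀ i, x i = vVec n a i ∨ x i = wVec n i)
    (k : Fin n) : x k 0 = if x k = vVec n a k then (a k : ℝ) else 0 := by
  split_ifs with h
  · simp [h]
  · simp [(hx k).resolve_left h]

end Selection

open Finset in
/-- if 0 is an affine combination of points x_i ∈ {v_i, w_i} and u, then all
coefficients equal 1/(n+1) and I = {i : x_i = v_i} satisfies ∑_{i ∈ I} a_i = b. -/
theorem stmt7 (n : ℕ) (a : Fin n → ℤ) (b : ℤ)
    (x : Fin n → Fin (n + 1) → ℝ)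
    (hx : ∀ i, x i = vVec n a i ∨ x i = wVec n i)
    (lam : Fin n → ℝ) (lamu : ℝ)
    (hsum : (∑ i, lam i) + lamu = 1)
    (hzero : (0 : Fin (n + 1) → ℝ) = (∑ i, lam i • x i) + lamu • uVec n b) :
    (∀ i, lam i = 1 / (n + 1)) ∧ lamu = 1 / (n + 1) ∧
      (∑ i ∈ Finset.univ.filter fun i => x i = vVec n a i, a i) = b := by
  have coord : ∀ j, ∑ i, lam i * x i j + lamu * uVec n b j = 0 := fun j => by
    simpa [Finset.sum_apply] using (congrFun hzero j).symm
  have hlam : ∀ i, lam i = lamu := fun i => by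
    have h := coord i.succ
    simp only [apply_succ_of_forall_eq_vVec_or_eq_wVec hx, uVec_apply_succ, mul_ite, mul_one,
      mul_zero, Finset.sum_ite_eq', Finset.mem_univ, if_true] at h
    linarith
  have hlamu : lamu = 1 / (n + 1) := by
    simp only [hlam, Finset.sum_const, Finset.card_univ, Fintype.card_fin, nsmul_eq_mul] at hsum
    field_simp
    linarith
  refine ⟨fun i => (hlam i).trans hlamu, hlamu, ?_⟩
  have h0 := coord 0
  simp only [apply_zero_of_forall_eq_vVec_or_eq_wVec hx, hlam, uVec_apply_zero, mul_ite, mul_zero,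
    ← Finset.sum_filter, ← Finset.mul_sum, ← mul_add] at h0
  have hlamu_ne : lamu ≠ 0 := by rw [hlamu]; positivity
  have hI : ∑ i ∈ Finset.univ.filter (fun i => x i = vVec n a i), (a i : ℝ) = b := by
    linarith [(mul_eq_zero.mp h0).resolve_left hlamu_ne]
  exact_mod_cast hI
end

section
/- Given weights w_1,…,w_n ∈ ℤ_+, number of bins k, and capacity b, construct in ℝ^{n+k+kn} the vectors v_{i,j}, u_{i,j} (for (i,j) ∈ [n]×[k]) and c as follows: v_{i,j} has entry w_i at coordinate j, entry 1 at coordinate k+i, entry 1 at coordinate n+k+(i−1)k+j, and 0 elsewhere; u_{i,j} agrees with v_{i,j} except the entries at coordinates j and k+i are 0; c has entry −b at coordinates 1,…,k and −1 at all other coordinates. Then there exist choices p_l ∈ {v_{i,j}, u_{i,j}} (l = (i−1)k+j) and reals λ_1,…,λ_{kn+1} with ∑_l λ_l p_l + λ_{kn+1} c = 0 and ∑_l λ_l = kn+1 (λ_{kn+1} included) if and only if the items with weights w_1,…,w_n can be partitioned into k bins each of total weight exactly b. -/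
/-- The vector v_{i,j} of the EqualBinPacking reduction (0-based coordinates):
entry w_i at coordinate j, entry 1 at coordinate k+i, entry 1 at coordinate
k+n+i·k+j, and 0 elsewhere. -/
noncomputable def vBP (n k : ℕ) (w : Fin n → ℤ) (i : Fin n) (j : Fin k) :
    Fin (k + n + k * n) → ℝ :=
  fun x => if (x : ℕ) = (j : ℕ) then (w i : ℝ)
    else if (x : ℕ) = k + (i : ℕ) then 1
    else if (x : ℕ) = k + n + (i : ℕ) * k + (j : ℕ) then 1 else 0

/-- The vector u_{i,j}: entry 1 at coordinate k+n+i·k+j and 0 elsewhere. -/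
noncomputable def uBP (n k : ℕ) (i : Fin n) (j : Fin k) : Fin (k + n + k * n) → ℝ :=
  fun x => if (x : ℕ) = k + n + (i : ℕ) * k + (j : ℕ) then 1 else 0

/-- The vector c: entry -b at the first k coordinates and -1 at all other coordinates. -/
noncomputable def cBP (n k : ℕ) (b : ℤ) : Fin (k + n + k * n) → ℝ :=
  fun x => if (x : ℕ) < k then (-b : ℝ) else -1

/-!
Evaluate `∑ λ_l p_l + λ_c c` coordinatewise. The slot coordinate of `(i, j)` is met only by
`p_(i,j)` and `c`, so every `λ_l` equals `λ_c`, and the normalisation `∑ λ = kn + 1` forces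
`λ_c = 1`. The item coordinate `i` then counts the bins `j` with `p_(i,j) = v_(i,j)`: there is
exactly one, which defines the assignment, and the bin coordinate `j` says that the weight of bin
`j` is `b`. Conversely, choosing `v_(i,j)` exactly when item `i` goes to bin `j`, with all
coefficients `1`, makes every coordinate vanish.
-/

namespace EqualBinPacking

variable {n k : ℕ}

def slotEquiv : Fin n × Fin k ≃ Fin (k * n) :=
  finProdFinEquiv.trans (finCongr (Nat.mul_comm n k))

def binCoord (n : ℕ) (j : Fin k) : Fin (k + n + k * n) := Fin.castAdd (k * n) (Fin.castAdd n j)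

def itemCoord (k : ℕ) (i : Fin n) : Fin (k + n + k * n) := Fin.castAdd (k * n) (Fin.natAdd k i)

def slotCoord (l : Fin n × Fin k) : Fin (k + n + k * n) := Fin.natAdd (k + n) (slotEquiv l)

@[simp] lemma val_binCoord (j : Fin k) : (binCoord n j : ℕ) = j := rfl

@[simp] lemma val_itemCoord (i : Fin n) : (itemCoord k i : ℕ) = k + i := rfl

lemma val_slotCoord (l : Fin n × Fin k) : (slotCoord l : ℕ) = k + n + l.1 * k + l.2 := by
  simp [slotCoord, slotEquiv, finProdFinEquiv]
  ring

lemma slotCoord_injective : Function.Injective (slotCoord (n := n) (k := k)) :=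
  (Fin.natAdd_injective _ _).comp slotEquiv.injective

lemma val_slotCoord_eq_iff {l : Fin n × Fin k} {i : Fin n} {j : Fin k} :
    (slotCoord l : ℕ) = k + n + i * k + j ↔ (i, j) = l := by
  rw [← val_slotCoord (i, j), Fin.val_inj, slotCoord_injective.eq_iff, eq_comm]

lemma le_slotCoord (l : Fin n × Fin k) : k + n ≤ (slotCoord l : ℕ) := by simp [slotCoord]

section Coordinates

variable (w : Fin n → ℤ) (b : ℤ) (i : Fin n) (j : Fin k)

lemma vBP_apply_binCoord (j' : Fin k) :
    vBP n k w i j (binCoord n j') = if j = j' then (w i : ℝ) else 0 := by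
  have hj' := j'.2
  have h₂ : ¬(j' : ℕ) = k + i := by omega
  have h₃ : ¬(j' : ℕ) = k + n + i * k + j := by omega
  simp only [vBP, val_binCoord, h₂, h₃, if_false, Fin.val_inj, eq_comm]

lemma vBP_apply_itemCoord (i' : Fin n) :
    vBP n k w i j (itemCoord k i') = if i = i' then 1 else 0 := by
  have hj := j.2
  have h₁ : ¬k + i' = (j : ℕ) := by omega
  have h₃ : ¬k + i' = k + n + i * k + j := by omega
  simp only [vBP, val_itemCoord, h₁, h₃, if_false, add_right_inj, Fin.val_inj, eq_comm]

lemma vBP_apply_slotCoord (l : Fin n × Fin k) :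
    vBP n k w i j (slotCoord l) = if (i, j) = l then 1 else 0 := by
  have hj := j.2
  have hslot := le_slotCoord l
  have h₁ : ¬(slotCoord l : ℕ) = j := by omega
  have h₂ : ¬(slotCoord l : ℕ) = k + i := by omega
  simp only [vBP, h₁, h₂, if_false, val_slotCoord_eq_iff]

lemma uBP_apply_binCoord (j' : Fin k) : uBP n k i j (binCoord n j') = 0 :=
  if_neg (by have := j'.2; rw [val_binCoord]; omega)

lemma uBP_apply_itemCoord (i' : Fin n) : uBP n k i j (itemCoord k i') = 0 :=
  if_neg (by have := j.2; rw [val_itemCoord]; omega)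

lemma uBP_apply_slotCoord (l : Fin n × Fin k) :
    uBP n k i j (slotCoord l) = if (i, j) = l then 1 else 0 := by
  simp only [uBP, val_slotCoord_eq_iff]

lemma cBP_apply_binCoord (j : Fin k) : cBP n k b (binCoord n j) = -b := if_pos j.2

lemma cBP_apply_itemCoord (i : Fin n) : cBP n k b (itemCoord k i) = -1 := if_neg (by simp)

lemma cBP_apply_slotCoord (l : Fin n × Fin k) : cBP n k b (slotCoord l) = -1 :=
  if_neg (by have := le_slotCoord l; omega)

end Coordinates

noncomputable def pBP (w : Fin n → ℤ) (s : Fin n × Fin k → Prop) [DecidablePred s]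
    (l : Fin n × Fin k) : Fin (k + n + k * n) → ℝ :=
  if s l then vBP n k w l.1 l.2 else uBP n k l.1 l.2

lemma exists_eq_pBP {w : Fin n → ℤ} {p : Fin n × Fin k → Fin (k + n + k * n) → ℝ}
    (hp : ∀ l, p l = vBP n k w l.1 l.2 ∨ p l = uBP n k l.1 l.2) :
    ∃ (s : Fin n × Fin k → Prop) (_ : DecidablePred s), p = pBP w s := by
  classical
  refine ⟨fun l => p l = vBP n k w l.1 l.2, inferInstance, funext fun l => ?_⟩
  unfold pBP
  split_ifs with h
  · exact h
  · exact (hp l).resolve_left h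

section Selection

variable (w : Fin n → ℤ) (b : ℤ) (s : Fin n × Fin k → Prop) [DecidablePred s]

lemma pBP_eq_or (l : Fin n × Fin k) :
    pBP w s l = vBP n k w l.1 l.2 ∨ pBP w s l = uBP n k l.1 l.2 := by
  unfold pBP; split_ifs <;> simp

lemma pBP_apply_binCoord (l : Fin n × Fin k) (j : Fin k) :
    pBP w s l (binCoord n j) = if l.2 = j ∧ s l then (w l.1 : ℝ) else 0 := by
  by_cases h : s l <;> simp [pBP, h, vBP_apply_binCoord, uBP_apply_binCoord]

lemma pBP_apply_itemCoord (l : Fin n × Fin k) (i : Fin n) :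
    pBP w s l (itemCoord k i) = if l.1 = i ∧ s l then 1 else 0 := by
  by_cases h : s l <;> simp [pBP, h, vBP_apply_itemCoord, uBP_apply_itemCoord]

lemma pBP_apply_slotCoord (l l' : Fin n × Fin k) :
    pBP w s l (slotCoord l') = if l = l' then 1 else 0 := by
  by_cases h : s l <;> simp [pBP, h, vBP_apply_slotCoord, uBP_apply_slotCoord]

variable (lam : Fin n × Fin k → ℝ) (lamc : ℝ)

lemma combination_apply_binCoord (j : Fin k) :
    (∑ l, lam l • pBP w s l + lamc • cBP n k b) (binCoord n j) =
      ∑ i with s (i, j), lam (i, j) * w i - lamc * b := by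
  simp [Finset.sum_apply, pBP_apply_binCoord, cBP_apply_binCoord, Fintype.sum_prod_type,
    Finset.sum_filter, ite_and, sub_eq_add_neg]

lemma combination_apply_itemCoord (i : Fin n) :
    (∑ l, lam l • pBP w s l + lamc • cBP n k b) (itemCoord k i) =
      ∑ j with s (i, j), lam (i, j) - lamc := by
  simp [Finset.sum_apply, pBP_apply_itemCoord, cBP_apply_itemCoord, Fintype.sum_prod_type,
    Finset.sum_filter, ite_and, sub_eq_add_neg]

lemma combination_apply_slotCoord (l : Fin n × Fin k) :
    (∑ l, lam l • pBP w s l + lamc • cBP n k b) (slotCoord l) = lam l - lamc := by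
  simp [Finset.sum_apply, pBP_apply_slotCoord, cBP_apply_slotCoord, sub_eq_add_neg]

lemma combination_eq_zero_iff :
    ∑ l, lam l • pBP w s l + lamc • cBP n k b = 0 ↔
      (∀ j, ∑ i with s (i, j), lam (i, j) * w i = lamc * b) ∧
      (∀ i, ∑ j with s (i, j), lam (i, j) = lamc) ∧ ∀ l, lam l = lamc := by
  rw [funext_iff, Fin.forall_fin_add, Fin.forall_fin_add, slotEquiv.symm.forall_congr_left,
    and_assoc]
  simp only [Pi.zero_apply, Equiv.symm_symm]
  refine and_congr (forall_congr' fun j => ?_) <| and_congr (forall_congr' fun i => ?_)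
    (forall_congr' fun l => ?_)
  · exact (combination_apply_binCoord w b s lam lamc j).congr_left.trans sub_eq_zero
  · exact (combination_apply_itemCoord w b s lam lamc i).congr_left.trans sub_eq_zero
  · exact (combination_apply_slotCoord w b s lam lamc l).congr_left.trans sub_eq_zero

end Selection

lemma exists_fun_of_card_filter_eq_one {α β : Type*} [Fintype β] {r : α → β → Prop}
    [∀ a, DecidablePred (r a)] (h : ∀ a, (Finset.univ.filter (r a)).card = 1) :
    ∃ f : α → β, ∀ a b, r a b ↔ f a = b := by
  choose f hf using fun a => Finset.card_eq_one.1 (h a)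
  refine ⟨f, fun a b => ?_⟩
  simpa [eq_comm] using Finset.ext_iff.1 (hf a) b

end EqualBinPacking

open EqualBinPacking

theorem stmt10_general (n k : ℕ)
    (w : Fin n → ℤ) (b : ℤ) :
    (∃ (p : Fin n × Fin k → Fin (k + n + k * n) → ℝ) (lam : Fin n × Fin k → ℝ) (lamc : ℝ),
        (∀ l : Fin n × Fin k, p l = vBP n k w l.1 l.2 ∨ p l = uBP n k l.1 l.2) ∧
        ((∑ l, lam l • p l) + lamc • cBP n k b = 0) ∧
        ((∑ l, lam l) + lamc = k * n + 1)) ↔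
      ∃ assign : Fin n → Fin k, ∀ j : Fin k,
        (∑ i ∈ Finset.univ.filter fun i => assign i = j, w i) = b := by
  constructor
  · rintro ⟨p, lam, lamc, hp, hzero, hsum⟩
    obtain ⟨s, _, rfl⟩ := exists_eq_pBP hp
    obtain ⟨hbin, hitem, hslot⟩ := (combination_eq_zero_iff w b s lam lamc).1 hzero
    have hlamc : lamc = 1 := by
      simp only [hslot, Finset.sum_const, Finset.card_univ, Fintype.card_prod, Fintype.card_fin,
        nsmul_eq_mul, Nat.cast_mul] at hsum
      have hfactor : ((k : ℝ) * n + 1) * (lamc - 1) = 0 := by linear_combination hsum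
      exact sub_eq_zero.1 ((mul_eq_zero.1 hfactor).resolve_left (by positivity))
    subst hlamc
    obtain ⟨assign, hassign⟩ := exists_fun_of_card_filter_eq_one (r := fun i j => s (i, j))
      fun i => by simpa [hslot] using hitem i
    refine ⟨assign, fun j => ?_⟩
    have hweight := hbin j
    simp only [hslot, one_mul, hassign] at hweight
    exact_mod_cast hweight
  · rintro ⟨assign, hassign⟩
    refine ⟨pBP w (fun l => assign l.1 = l.2), fun _ => 1, 1, pBP_eq_or w _,
      (combination_eq_zero_iff w b _ _ 1).2 ⟨fun j => ?_, fun i => ?_, fun _ => rfl⟩, ?_⟩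
    · simpa using congrArg (Int.cast : ℤ → ℝ) (hassign j)
    · simp [Finset.filter_eq]
    · simp [mul_comm]

/-- correctness of the EqualBinPacking reduction. -/
theorem stmt10 (n k : ℕ) (hn : 0 < n) (hk : 0 < k)
    (w : Fin n → ℤ) (hw : ∀ i, 0 < w i) (b : ℤ) :
    (∃ (p : Fin n × Fin k → Fin (k + n + k * n) → ℝ) (lam : Fin n × Fin k → ℝ) (lamc : ℝ),
        (∀ l : Fin n × Fin k, p l = vBP n k w l.1 l.2 ∨ p l = uBP n k l.1 l.2) ∧
        ((∑ l, lam l • p l) + lamc • cBP n k b = 0) ∧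
        ((∑ l, lam l) + lamc = k * n + 1)) ↔
      ∃ assign : Fin n → Fin k, ∀ j : Fin k,
        (∑ i ∈ Finset.univ.filter fun i => assign i = j, w i) = b :=
  stmt10_general n k w b
end

section
/- Let S consist of 2k line segments in ℝ^k with endpoints A_i, B_i and G_i, H_i (i = 1,…,k), where G_i = α_i A_i and H_i = β_i B_i for positive reals α_i, β_i. Lift to ℝ^{2k} by A'_i = (A_i, 0), B'_i = (B_i, 0), G'_i = (G_i, ε·e_i), H'_i = (H_i, ε·e_i) with ε > 0, where e_i is the i-th standard basis vector of ℝ^k. If the lifted family S' admits a hyperplane through the origin transversal in ℝ^{2k}, i.e., there exist l_i, g_i ∈ [0,1] and reals m^{(i)}, n^{(i)} with ∑_i m^{(i)}(l_i A'_i + (1−l_i)B'_i) + ∑_i n^{(i)}(g_i G'_i + (1−g_i)H'_i) = 0 and ∑_i (m^{(i)} + n^{(i)}) = 1, then all n^{(i)} = 0 and ∑_i m^{(i)}(l_i A_i + (1−l_i)B_i) = 0 with ∑_i m^{(i)} = 1. -/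
/-- for the lifted segments in ℝ^{2k}, any affine combination of points on
the segments expressing the origin must use zero coefficients on all gadget segments, and
hence yields a transversal of the original segments through the origin. -/
theorem stmt14 (k : ℕ) (A B G H : Fin k → Fin k → ℝ) (α β : Fin k → ℝ)
    (hα : ∀ i, 0 < α i) (hβ : ∀ i, 0 < β i)
    (hG : ∀ i, G i = α i • A i) (hH : ∀ i, H i = β i • B i)
    (ε : ℝ) (hε : 0 < ε)
    (l g : Fin k → ℝ) (hl : ∀ i, l i ∈ Set.Icc (0 : ℝ) 1) (hg : ∀ i, g i ∈ Set.Icc (0 : ℝ) 1)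
    (m n : Fin k → ℝ)
    (heq : (∑ i, m i • (l i • ((A i, 0) : (Fin k → ℝ) × (Fin k → ℝ))
              + (1 - l i) • ((B i, 0) : (Fin k → ℝ) × (Fin k → ℝ))))
          + (∑ i, n i • (g i • ((G i, Pi.single i ε) : (Fin k → ℝ) × (Fin k → ℝ))
              + (1 - g i) • ((H i, Pi.single i ε) : (Fin k → ℝ) × (Fin k → ℝ))))
          = 0)
    (hsum : (∑ i, (m i + n i)) = 1) :
    (∀ i, n i = 0) ∧ (∑ i, m i • (l i • A i + (1 - l i) • B i)) = 0 ∧ (∑ i, m i) = 1 := by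
  have hn : ∀ j, n j = 0 := by
    intro j
    have h2 := congrArg (fun p => p.2 j) heq
    simp only [Prod.snd_add, Prod.snd_sum, Prod.smul_snd, Prod.snd_zero, smul_add,
      Finset.sum_apply, Pi.add_apply, Pi.smul_apply, smul_eq_mul, smul_zero,
      Pi.zero_apply, mul_zero, add_zero, Finset.sum_const_zero, zero_add,
      Pi.single_apply] at h2
    rw [Finset.sum_congr rfl (fun i _ =>
      show (n i * (g i * if j = i then ε else 0) + n i * ((1 - g i) * if j = i then ε else 0))
          = if j = i then n i * ε else 0 by split <;> ring)] at h2
    rw [Finset.sum_ite_eq] at h2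
    simp at h2
    rcases h2 with h | h
    · exact h
    · exact absurd h (ne_of_gt hε)
  refine ⟨hn, ?_, ?_⟩
  · have h1 := congrArg Prod.fst heq
    simp only [Prod.fst_add, Prod.fst_sum, Prod.smul_fst, Prod.fst_zero, hn, zero_smul,
      Finset.sum_const_zero, add_zero] at h1
    exact h1
  · simpa [hn] using hsum
end

section
/- Let G = (V,E) be a graph on n vertices and k ≥ 2. Suppose for each pair (α,β) ∈ [k]×[k] we assign a tuple t_{α,β} ∈ [n]×[n] such that: t_{α,α} = (i,i) for some i; for α ≠ β, t_{α,β} = (i,j) with {i,j} ∈ E; all tuples in the same row have equal first component; and all tuples in the same column have equal second component. Then the vertices v_α := first component of t_{α,α} (α ∈ [k]) form a clique of size k in G, i.e. v_α ≠ v_β and {v_α, v_β} ∈ E for α ≠ β. -/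
/-- a valid row/column-consistent assignment of admissible tuples to the
k×k grid of encoding gadgets certifies a k-clique in G. -/
theorem stmt18 (n k : ℕ) (hk : 2 ≤ k) (G : SimpleGraph (Fin n))
    (t : Fin k → Fin k → Fin n × Fin n)
    (hdiag : ∀ α, (t α α).1 = (t α α).2)
    (hedge : ∀ α β, α ≠ β → G.Adj (t α β).1 (t α β).2)
    (hrow : ∀ α β β', (t α β).1 = (t α β').1)
    (hcol : ∀ α α' β, (t α β).2 = (t α' β).2) :
    ∀ α β, α ≠ β → (t α α).1 ≠ (t β β).1 ∧ G.Adj (t α α).1 (t β β).1 := by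
  intro α β hne
  have h1 : (t α β).1 = (t α α).1 := hrow α β α
  have h2 : (t α β).2 = (t β β).1 := by rw [hcol α β β, ← hdiag]
  have hadj : G.Adj (t α α).1 (t β β).1 := by
    rw [← h1, ← h2]; exact hedge α β hne
  exact ⟨hadj.ne, hadj⟩
end
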